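/- arXiv:1311.5675 — 4 statements merged into one kernel-verified Lean document; each statement's English description precedes it below -/
import Mathlib

section
/- Let A = ⨁_{p=0}^{2n} A^p be a graded-commutative ℝ-algebra with each A^p finite-dimensional over ℝ, and let ω ∈ A^2 be such that for every 0 ≤ p ≤ n the Lefschetz map A^p → A^{2n−p}, x ↦ ω^{n−p}·x, is a linear isomorphism. For s ≥ 1 set b_s := dim_ℝ A^s + dim_ℝ A^{s−1} (with A^s = 0 for s > 2n). Then b_1 ≤ b_2 ≤ … ≤ b_n and b_n = b_{n+1}. (Algebraic form of the Betti-number inequalities of Theorem 2.2(ii): the numbers b_s are the Betti numbers of a compact co-Kähler manifold built from a cohomologically Kählerian algebra.) -/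
/-!
Multiplication by `ω` maps `A^p` to `A^(p+2)`. For `p < n` it is injective, because the Lefschetz
isomorphism `ω^(n-p)` factors through it; for `p = n - 1` it is the Lefschetz isomorphism itself.
Hence `dim A^(s-1) ≤ dim A^(s+1)` for `1 ≤ s < n` and `dim A^(n-1) = dim A^(n+1)`, which are the
claimed relations between the `b_s` after cancelling `dim A^s`.
-/

namespace GradedAlgebra

variable {R A : Type*} [CommSemiring R] [Semiring A] [Algebra R A]
  {𝒜 : ℕ → Submodule R A} [SetLike.GradedMul 𝒜] {ω : A} {i p q : ℕ}

def mulLeft (hω : ω ∈ 𝒜 i) (hq : i + p = q) : 𝒜 p →ₗ[R] 𝒜 q :=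
  (LinearMap.mulLeft R ω).restrict fun _ hx => hq ▸ SetLike.mul_mem_graded hω hx

theorem mulLeft_injective_of_injOn_pow_mul (hω : ω ∈ 𝒜 i) (hq : i + p = q) {m : ℕ}
    (hm : 0 < m) (hinj : Set.InjOn (fun x => ω ^ m * x) (𝒜 p)) :
    Function.Injective (mulLeft hω hq) := by
  intro x y hxy
  have hωxy : ω * (x : A) = ω * y := congrArg Subtype.val hxy
  refine Subtype.ext (hinj x.2 y.2 ?_)
  change ω ^ m * (x : A) = ω ^ m * y
  rw [← Nat.sub_add_cancel hm, pow_succ, mul_assoc, mul_assoc, hωxy]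

theorem mulLeft_surjective_of_surjOn (hω : ω ∈ 𝒜 i) (hq : i + p = q)
    (hsurj : Set.SurjOn (fun x => ω * x) (𝒜 p) (𝒜 q)) :
    Function.Surjective (mulLeft hω hq) := fun y => by
  obtain ⟨x, hx, hxy⟩ := hsurj y.2
  exact ⟨⟨x, hx⟩, Subtype.ext hxy⟩

end GradedAlgebra

section HardLefschetz

open GradedAlgebra

variable {K A : Type*} [Field K] [Ring A] [Algebra K A]
  {𝒜 : ℕ → Submodule K A} [SetLike.GradedMul 𝒜] {ω : A} {n : ℕ}

theorem finrank_le_finrank_add_two_of_lefschetz [∀ p, FiniteDimensional K (𝒜 p)]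
    (hω : ω ∈ 𝒜 2)
    (hLef : ∀ p ≤ n, Set.BijOn (fun x => ω ^ (n - p) * x) (𝒜 p) (𝒜 (2 * n - p)))
    {p : ℕ} (hp : p < n) :
    Module.finrank K (𝒜 p) ≤ Module.finrank K (𝒜 (p + 2)) :=
  LinearMap.finrank_le_finrank_of_injective <|
    mulLeft_injective_of_injOn_pow_mul hω (Nat.add_comm 2 p) (Nat.sub_pos_of_lt hp)
      (hLef p hp.le).injOn

theorem finrank_pred_eq_finrank_succ_of_lefschetz (hω : ω ∈ 𝒜 2)
    (hLef : ∀ p ≤ n, Set.BijOn (fun x => ω ^ (n - p) * x) (𝒜 p) (𝒜 (2 * n - p)))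
    (hn : 1 ≤ n) :
    Module.finrank K (𝒜 (n - 1)) = Module.finrank K (𝒜 (n + 1)) := by
  have hdeg : 2 + (n - 1) = n + 1 := by omega
  have hbij : Set.BijOn (fun x => ω * x) (𝒜 (n - 1)) (𝒜 (n + 1)) := by
    have h := hLef (n - 1) (Nat.sub_le n 1)
    rwa [Nat.sub_sub_self hn, pow_one, show 2 * n - (n - 1) = n + 1 by omega] at h
  exact (LinearEquiv.ofBijective (mulLeft hω hdeg)
    ⟨mulLeft_injective_of_injOn_pow_mul hω hdeg one_pos (by simpa using hbij.injOn),
      mulLeft_surjective_of_surjOn hω hdeg hbij.surjOn⟩).finrank_eq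

end HardLefschetz

theorem Betti_numbers_of_coKahler_from_cohomologically_Kahlerian_general
    {A : Type*} [Ring A] [Algebra ℝ A] (n : ℕ)
    (𝒜 : ℕ → Submodule ℝ A) [GradedAlgebra 𝒜]
    (hfin : ∀ p : ℕ, FiniteDimensional ℝ (𝒜 p))
    (ω : A) (hω : ω ∈ 𝒜 2)
    (hLef : ∀ p : ℕ, p ≤ n →
      Set.BijOn (fun x : A => ω ^ (n - p) * x) (𝒜 p) (𝒜 (2 * n - p))) :
    (∀ s : ℕ, 1 ≤ s → s < n →
      Module.finrank ℝ (𝒜 s) + Module.finrank ℝ (𝒜 (s - 1)) ≤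
        Module.finrank ℝ (𝒜 (s + 1)) + Module.finrank ℝ (𝒜 s)) ∧
    (1 ≤ n →
      Module.finrank ℝ (𝒜 n) + Module.finrank ℝ (𝒜 (n - 1)) =
        Module.finrank ℝ (𝒜 (n + 1)) + Module.finrank ℝ (𝒜 n)) := by
  refine ⟨fun s hs hsn => ?_, fun hn => ?_⟩
  · have h := finrank_le_finrank_add_two_of_lefschetz (𝒜 := 𝒜) hω hLef (p := s - 1) (by omega)
    rw [show s - 1 + 2 = s + 1 by omega] at h
    omega
  · have h := finrank_pred_eq_finrank_succ_of_lefschetz hω hLef hn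
    omega

/-- Algebraic form of the Betti-number inequalities of Theorem 2.2(ii): if
`A = ⨁_{p=0}^{2n} A^p` is a graded-commutative ℝ-algebra with finite-dimensional
graded pieces and `ω ∈ A^2` is such that all Lefschetz maps
`x ↦ ω^(n-p) * x : A^p → A^(2n-p)`, `0 ≤ p ≤ n`, are bijections, then setting
`b s := dim A^s + dim A^(s-1)` for `s ≥ 1`, one has
`b 1 ≤ b 2 ≤ … ≤ b n` and `b n = b (n+1)`. -/
theorem Betti_numbers_of_coKahler_from_cohomologically_Kahlerian
    {A : Type*} [Ring A] [Algebra ℝ A] (n : ℕ)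
    (𝒜 : ℕ → Submodule ℝ A) [GradedAlgebra 𝒜]
    (hfin : ∀ p : ℕ, FiniteDimensional ℝ (𝒜 p))
    (htop : ∀ p : ℕ, 2 * n < p → 𝒜 p = ⊥)
    (hcomm : ∀ (p q : ℕ) (x y : A), x ∈ 𝒜 p → y ∈ 𝒜 q →
      x * y = ((-1 : ℝ) ^ (p * q)) • (y * x))
    (ω : A) (hω : ω ∈ 𝒜 2)
    (hLef : ∀ p : ℕ, p ≤ n →
      Set.BijOn (fun x : A => ω ^ (n - p) * x) (𝒜 p) (𝒜 (2 * n - p))) :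
    (∀ s : ℕ, 1 ≤ s → s < n →
      Module.finrank ℝ (𝒜 s) + Module.finrank ℝ (𝒜 (s - 1)) ≤
        Module.finrank ℝ (𝒜 (s + 1)) + Module.finrank ℝ (𝒜 s)) ∧
    (1 ≤ n →
      Module.finrank ℝ (𝒜 n) + Module.finrank ℝ (𝒜 (n - 1)) =
        Module.finrank ℝ (𝒜 (n + 1)) + Module.finrank ℝ (𝒜 n)) :=
  Betti_numbers_of_coKahler_from_cohomologically_Kahlerian_general n 𝒜 hfin ω hω hLef
end

section
/- Let H = ⨁_{p≥0} H^p and G = ⨁_{p≥0} G^p be graded-commutative ℝ-algebras that both satisfy Property B. Then the graded tensor product H ⊗ G, with multiplication (x⊗y)·(x'⊗y') = (−1)^{|y||x'|} (xx')⊗(yy') and grading (H⊗G)^n = ⨁_{p+q=n} H^p ⊗ G^q, also satisfies Property B. (Proposition 3.4.) -/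
/-!
Identify `C` with `H ⊗ G`. Taking the coordinate of the `H`-factor along a basis vector of
degree `p` of a homogeneous basis of `H` gives a linear map `L : C → G` lowering degrees by `p`,
right `G`-linear, and left `G`-linear up to the Koszul sign. If `θ` is a derivation of `C` of
degree `-k` killing `C¹`, then `L ∘ θ ∘ g` is a derivation of `G` of degree `-(k + p)` killing
`G¹`, hence zero by Property B; these coordinates separate points, so `θ ∘ g = 0`. The graded
braiding `H ⊗ G ≃ G ⊗ H` exchanges the two factors and gives `θ ∘ f = 0`, and then the Leibniz
rule kills `θ` on the products `f x * g y`, which span `C`.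
-/

/-- `θ` is a graded derivation of negative degree `-k` of the graded algebra
`C = ⨁_p C^p` (with grading `𝒞`): it lowers degree by `k` (killing degrees
below `k`) and satisfies the graded Leibniz rule
`θ(xy) = θ(x)y + (-1)^(k·p) x θ(y)` for homogeneous `x` of degree `p`. -/
structure IsGradedDerivation {C : Type*} [Ring C] [Algebra ℝ C]
    (𝒞 : ℕ → Submodule ℝ C) (k : ℕ) (θ : C →ₗ[ℝ] C) : Prop where
  mem : ∀ p : ℕ, ∀ x ∈ 𝒞 p, k ≤ p → θ x ∈ 𝒞 (p - k)
  low : ∀ p : ℕ, ∀ x ∈ 𝒞 p, p < k → θ x = 0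
  leibniz : ∀ p : ℕ, ∀ x ∈ 𝒞 p, ∀ y : C,
    θ (x * y) = θ x * y + ((-1 : ℝ) ^ (k * p)) • (x * θ y)

/-- A graded algebra `C` (with grading `𝒞`) has Property B if every graded
derivation of negative degree vanishing on `C^1` is zero. -/
def HasPropertyB {C : Type*} [Ring C] [Algebra ℝ C]
    (𝒞 : ℕ → Submodule ℝ C) : Prop :=
  ∀ k : ℕ, 1 ≤ k → ∀ θ : C →ₗ[ℝ] C, IsGradedDerivation 𝒞 k θ →
    (∀ x ∈ 𝒞 1, θ x = 0) → θ = 0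

open TensorProduct

section Contraction

variable {B C : Type*} [Ring B] [Algebra ℝ B] [Ring C] [Algebra ℝ C]

structure IsContraction (ℬ : ℕ → Submodule ℝ B) (𝒞 : ℕ → Submodule ℝ C) (b : B →ₐ[ℝ] C)
    (d : ℕ) (L : C →ₗ[ℝ] B) : Prop where
  map_mul_right : ∀ c y, L (c * b y) = L c * y
  map_mul_left : ∀ q, ∀ y ∈ ℬ q, ∀ c, L (b y * c) = ((-1 : ℝ) ^ (d * q)) • (y * L c)
  mem : ∀ n, ∀ c ∈ 𝒞 n, d ≤ n → L c ∈ ℬ (n - d)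
  low : ∀ n, ∀ c ∈ 𝒞 n, n < d → L c = 0

variable {ℬ : ℕ → Submodule ℝ B} {𝒞 : ℕ → Submodule ℝ C} {b : B →ₐ[ℝ] C} {k : ℕ}
  {θ : C →ₗ[ℝ] C}

theorem IsGradedDerivation.contract (hθ : IsGradedDerivation 𝒞 k θ)
    (hb : ∀ q, ∀ y ∈ ℬ q, b y ∈ 𝒞 q) {d : ℕ} {L : C →ₗ[ℝ] B} (hL : IsContraction ℬ 𝒞 b d L) :
    IsGradedDerivation ℬ (k + d) (L ∘ₗ θ ∘ₗ b.toLinearMap) where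
  mem q y hy hq := by
    simpa [Nat.sub_sub] using hL.mem _ _ (hθ.mem q _ (hb q y hy) (by omega)) (by omega)
  low q y hy hq := by
    by_cases hqk : q < k
    · simp [hθ.low q _ (hb q y hy) hqk]
    · exact hL.low _ _ (hθ.mem q _ (hb q y hy) (by omega)) (by omega)
  leibniz q y hy y' := by
    simp [hθ.leibniz q _ (hb q y hy), hL.map_mul_right, hL.map_mul_left q y hy, smul_smul,
      ← pow_add, add_mul]

theorem IsGradedDerivation.apply_eq_zero_of_contractions (hθ : IsGradedDerivation 𝒞 k θ)
    (hk : 1 ≤ k) (hθ₁ : ∀ x ∈ 𝒞 1, θ x = 0) (hB : HasPropertyB ℬ)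
    (hb : ∀ q, ∀ y ∈ ℬ q, b y ∈ 𝒞 q) {ι : Type*} (d : ι → ℕ) (L : ι → C →ₗ[ℝ] B)
    (hL : ∀ i, IsContraction ℬ 𝒞 b (d i) (L i)) (hsep : ∀ c, (∀ i, L i c = 0) → c = 0)
    (y : B) : θ (b y) = 0 :=
  hsep _ fun i => LinearMap.congr_fun
    (hB (k + d i) (by omega) _ (hθ.contract hb (hL i)) fun y hy => by simp [hθ₁ _ (hb 1 y hy)]) y

end Contraction

section GradedTensorProduct

variable {A B C : Type*} [Ring A] [Algebra ℝ A] [Ring B] [Algebra ℝ B] [Ring C] [Algebra ℝ C]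

def tensorMul (a : A →ₐ[ℝ] C) (b : B →ₐ[ℝ] C) : A ⊗[ℝ] B →ₗ[ℝ] C :=
  TensorProduct.lift (((LinearMap.mul ℝ C).comp a.toLinearMap).compl₂ b.toLinearMap)

@[simp]
theorem tensorMul_tmul (a : A →ₐ[ℝ] C) (b : B →ₐ[ℝ] C) (x : A) (y : B) :
    tensorMul a b (x ⊗ₜ y) = a x * b y := rfl

structure IsGradedTensorProduct (𝒜 : ℕ → Submodule ℝ A) (ℬ : ℕ → Submodule ℝ B)
    (𝒞 : ℕ → Submodule ℝ C) (a : A →ₐ[ℝ] C) (b : B →ₐ[ℝ] C) : Prop where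
  map_mem_left : ∀ p, ∀ x ∈ 𝒜 p, a x ∈ 𝒞 p
  map_mem_right : ∀ q, ∀ y ∈ ℬ q, b y ∈ 𝒞 q
  koszul : ∀ p q x y, x ∈ 𝒜 p → y ∈ ℬ q → b y * a x = ((-1 : ℝ) ^ (p * q)) • (a x * b y)
  bijective : Function.Bijective (tensorMul a b)
  grade : ∀ m, 𝒞 m = ⨆ p, ⨆ q, ⨆ _ : p + q = m,
    Submodule.span ℝ {z | ∃ x ∈ 𝒜 p, ∃ y ∈ ℬ q, z = a x * b y}

variable {𝒜 : ℕ → Submodule ℝ A} {ℬ : ℕ → Submodule ℝ B} {𝒞 : ℕ → Submodule ℝ C}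
  {a : A →ₐ[ℝ] C} {b : B →ₐ[ℝ] C}

variable (𝒜) in
noncomputable def homogeneousBasis [DirectSum.Decomposition 𝒜] :
    Module.Basis (Σ p, Module.Basis.ofVectorSpaceIndex ℝ (𝒜 p)) ℝ A :=
  (DirectSum.Decomposition.isInternal 𝒜).collectedBasis fun p => Module.Basis.ofVectorSpace ℝ (𝒜 p)

theorem homogeneousBasis_repr_eq_zero [DirectSum.Decomposition 𝒜] {p : ℕ} {x : A} (hx : x ∈ 𝒜 p)
    {i : Σ p, Module.Basis.ofVectorSpaceIndex ℝ (𝒜 p)} (hi : p ≠ i.1) :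
    (homogeneousBasis 𝒜).repr x i = 0 :=
  (DirectSum.Decomposition.isInternal 𝒜).collectedBasis_repr_of_mem_ne _ hi hx

namespace IsGradedTensorProduct

theorem koszul_symm (h : IsGradedTensorProduct 𝒜 ℬ 𝒞 a b) (p q : ℕ) (x : A) (y : B)
    (hx : x ∈ 𝒜 p) (hy : y ∈ ℬ q) : a x * b y = ((-1 : ℝ) ^ (p * q)) • (b y * a x) := by
  rw [h.koszul p q x y hx hy, smul_smul, ← pow_add, ← two_mul, pow_mul, neg_one_sq, one_pow,
    one_smul]

theorem span_mul_swap (h : IsGradedTensorProduct 𝒜 ℬ 𝒞 a b) (p q : ℕ) :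
    Submodule.span ℝ {z | ∃ y ∈ ℬ q, ∃ x ∈ 𝒜 p, z = b y * a x} =
      Submodule.span ℝ {z | ∃ x ∈ 𝒜 p, ∃ y ∈ ℬ q, z = a x * b y} := by
  apply le_antisymm <;> rw [Submodule.span_le] <;> rintro _ ⟨u, hu, v, hv, rfl⟩
  · rw [h.koszul p q v u hv hu]
    exact Submodule.smul_mem _ _ (Submodule.subset_span ⟨v, hv, u, hu, rfl⟩)
  · rw [h.koszul_symm p q u v hu hv]
    exact Submodule.smul_mem _ _ (Submodule.subset_span ⟨v, hv, u, hu, rfl⟩)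

theorem tensorMul_swap_eq [GradedAlgebra 𝒜] [GradedAlgebra ℬ]
    (h : IsGradedTensorProduct 𝒜 ℬ 𝒞 a b) :
    tensorMul b a = tensorMul a b ∘ₗ ((GradedTensorProduct.of ℝ ℬ 𝒜).trans
      ((GradedTensorProduct.comm ℬ 𝒜).toLinearEquiv.trans
        (GradedTensorProduct.of ℝ 𝒜 ℬ).symm)).toLinearMap := by
  apply TensorProduct.ext
  refine DirectSum.decompose_lhom_ext ℬ fun q => LinearMap.ext fun y => ?_
  refine DirectSum.decompose_lhom_ext 𝒜 fun p => LinearMap.ext fun x => ?_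
  simp [h.koszul p q x y x.2 y.2, Units.smul_def, ← Int.cast_smul_eq_zsmul ℝ]

theorem swap [GradedAlgebra 𝒜] [GradedAlgebra ℬ] (h : IsGradedTensorProduct 𝒜 ℬ 𝒞 a b) :
    IsGradedTensorProduct ℬ 𝒜 𝒞 b a where
  map_mem_left := h.map_mem_right
  map_mem_right := h.map_mem_left
  koszul q p y x hy hx := by rw [h.koszul_symm p q x y hx hy, mul_comm p q]
  bijective := by
    rw [h.tensorMul_swap_eq]
    exact h.bijective.comp (LinearEquiv.bijective _)
  grade m := by
    rw [h.grade m, iSup_comm]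
    simp_rw [h.span_mul_swap, add_comm]

theorem le_of_forall_mul_mem (h : IsGradedTensorProduct 𝒜 ℬ 𝒞 a b) {m : ℕ} {S : Submodule ℝ C}
    (hS : ∀ p q, p + q = m → ∀ x ∈ 𝒜 p, ∀ y ∈ ℬ q, a x * b y ∈ S) : 𝒞 m ≤ S := by
  rw [h.grade m]
  refine iSup_le fun p => iSup_le fun q => iSup_le fun hpq => Submodule.span_le.mpr ?_
  rintro _ ⟨x, hx, y, hy, rfl⟩
  exact hS p q hpq x hx y hy

theorem induction_on [DirectSum.Decomposition 𝒜] (h : IsGradedTensorProduct 𝒜 ℬ 𝒞 a b)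
    {motive : C → Prop} (c : C) (zero : motive 0)
    (add : ∀ c c', motive c → motive c' → motive (c + c'))
    (mul : ∀ p, ∀ x ∈ 𝒜 p, ∀ y, motive (a x * b y)) : motive c := by
  obtain ⟨u, rfl⟩ := h.bijective.2 c
  induction u using TensorProduct.induction_on with
  | zero => simpa using zero
  | tmul x y =>
    induction x using DirectSum.Decomposition.inductionOn 𝒜 with
    | zero => simpa using zero
    | homogeneous x => exact mul _ x x.2 y
    | add x x' hx hx' => simpa [add_mul] using add _ _ hx hx'
  | add u u' hu hu' => simpa using add _ _ hu hu'

open Classical in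
noncomputable def contraction [DirectSum.Decomposition 𝒜] (h : IsGradedTensorProduct 𝒜 ℬ 𝒞 a b)
    (i : Σ p, Module.Basis.ofVectorSpaceIndex ℝ (𝒜 p)) : C →ₗ[ℝ] B :=
  Finsupp.lapply i ∘ₗ (equivFinsuppOfBasisLeft (homogeneousBasis 𝒜)).toLinearMap ∘ₗ
    (LinearEquiv.ofBijective _ h.bijective).symm.toLinearMap

variable [DirectSum.Decomposition 𝒜]

theorem contraction_mul (h : IsGradedTensorProduct 𝒜 ℬ 𝒞 a b) (i) (x : A) (y : B) :
    h.contraction i (a x * b y) = (homogeneousBasis 𝒜).repr x i • y := by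
  have : (LinearEquiv.ofBijective _ h.bijective).symm (a x * b y) = x ⊗ₜ y := by
    rw [LinearEquiv.symm_apply_eq]; rfl
  simp [contraction, this]

theorem isContraction (h : IsGradedTensorProduct 𝒜 ℬ 𝒞 a b) (i) :
    IsContraction ℬ 𝒞 b i.1 (h.contraction i) where
  map_mul_right c y' := by
    induction c using h.induction_on with
    | zero => simp
    | add c c' hc hc' => simp [add_mul, hc, hc']
    | mul p x hx y =>
      rw [mul_assoc, ← map_mul, contraction_mul, contraction_mul, smul_mul_assoc]
  map_mul_left q y hy c := by
    induction c using h.induction_on with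
    | zero => simp
    | add c c' hc hc' => simp [mul_add, hc, hc']
    | mul p x hx y' =>
      rw [← mul_assoc, h.koszul p q x y hx hy, smul_mul_assoc, mul_assoc, ← map_mul, map_smul,
        contraction_mul, contraction_mul]
      by_cases hp : p = i.1
      · subst hp
        rw [mul_smul_comm, smul_comm]
      · simp [homogeneousBasis_repr_eq_zero hx hp]
  mem n c hc hn := by
    refine h.le_of_forall_mul_mem (S := (ℬ (n - i.1)).comap (h.contraction i)) ?_ hc
    intro p q hpq x hx y hy
    rw [Submodule.mem_comap, contraction_mul]
    by_cases hp : p = i.1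
    · exact Submodule.smul_mem _ _ (by rwa [← hp, ← hpq, Nat.add_sub_cancel_left])
    · simp [homogeneousBasis_repr_eq_zero hx hp]
  low n c hc hn := by
    refine h.le_of_forall_mul_mem (S := LinearMap.ker (h.contraction i)) ?_ hc
    intro p q hpq x hx y hy
    rw [LinearMap.mem_ker, contraction_mul, homogeneousBasis_repr_eq_zero hx (by omega), zero_smul]

theorem eq_zero_of_forall_contraction_eq_zero (h : IsGradedTensorProduct 𝒜 ℬ 𝒞 a b) (c : C)
    (hc : ∀ i, h.contraction i c = 0) : c = 0 := by
  classical
  have : equivFinsuppOfBasisLeft (homogeneousBasis 𝒜)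
      ((LinearEquiv.ofBijective _ h.bijective).symm c) = 0 := Finsupp.ext hc
  simpa using this

theorem derivation_apply_right_eq_zero (h : IsGradedTensorProduct 𝒜 ℬ 𝒞 a b)
    (hB : HasPropertyB ℬ) {k : ℕ} {θ : C →ₗ[ℝ] C} (hθ : IsGradedDerivation 𝒞 k θ) (hk : 1 ≤ k)
    (hθ₁ : ∀ x ∈ 𝒞 1, θ x = 0) (y : B) : θ (b y) = 0 :=
  hθ.apply_eq_zero_of_contractions hk hθ₁ hB h.map_mem_right _ h.contraction h.isContraction
    h.eq_zero_of_forall_contraction_eq_zero y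

theorem derivation_eq_zero (h : IsGradedTensorProduct 𝒜 ℬ 𝒞 a b) {k : ℕ} {θ : C →ₗ[ℝ] C}
    (hθ : IsGradedDerivation 𝒞 k θ) (ha : ∀ x, θ (a x) = 0) (hb : ∀ y, θ (b y) = 0) : θ = 0 :=
  LinearMap.ext fun c => by
    induction c using h.induction_on with
    | zero => simp
    | add c c' hc hc' => simp [hc, hc']
    | mul p x hx y => simp [hθ.leibniz p _ (h.map_mem_left p x hx), ha, hb]

end IsGradedTensorProduct

end GradedTensorProduct

theorem propertyB_of_graded_tensor_product_general
    {H G C : Type*} [Ring H] [Algebra ℝ H] [Ring G] [Algebra ℝ G]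
    [Ring C] [Algebra ℝ C]
    (𝒜 : ℕ → Submodule ℝ H) [GradedAlgebra 𝒜]
    (ℬ : ℕ → Submodule ℝ G) [GradedAlgebra ℬ]
    (𝒞 : ℕ → Submodule ℝ C)
    (f : H →ₐ[ℝ] C) (g : G →ₐ[ℝ] C)
    (hf : ∀ p : ℕ, ∀ x ∈ 𝒜 p, f x ∈ 𝒞 p)
    (hg : ∀ q : ℕ, ∀ y ∈ ℬ q, g y ∈ 𝒞 q)
    (hkoszul : ∀ (p q : ℕ) (x : H) (y : G), x ∈ 𝒜 p → y ∈ ℬ q →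
      g y * f x = ((-1 : ℝ) ^ (p * q)) • (f x * g y))
    (hbij : Function.Bijective
      (TensorProduct.lift
        (((LinearMap.mul ℝ C).comp f.toLinearMap).compl₂ g.toLinearMap)))
    (hgrade : ∀ m : ℕ, 𝒞 m =
      ⨆ p : ℕ, ⨆ q : ℕ, ⨆ _ : p + q = m,
        Submodule.span ℝ {z : C | ∃ x ∈ 𝒜 p, ∃ y ∈ ℬ q, z = f x * g y})
    (hH : HasPropertyB 𝒜) (hG : HasPropertyB ℬ) :
    HasPropertyB 𝒞 := by
  intro k hk θ hθ hθ₁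
  have hfg : IsGradedTensorProduct 𝒜 ℬ 𝒞 f g := ⟨hf, hg, hkoszul, hbij, hgrade⟩
  exact hfg.derivation_eq_zero hθ (hfg.swap.derivation_apply_right_eq_zero hH hθ hk hθ₁)
    (hfg.derivation_apply_right_eq_zero hG hθ hk hθ₁)

/-- Proposition 3.4: if `H` and `G` are graded-commutative ℝ-algebras with
Property B, then their graded tensor product `H ⊗ G` (with the Koszul-sign
multiplication and the total grading) also has Property B.  Here the graded
tensor product is axiomatized: `C` is a graded algebra equipped with
degree-preserving algebra maps `f : H → C` and `g : G → C` whose images commute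
up to Koszul sign, such that `x ⊗ y ↦ f x * g y` is a linear bijection
`H ⊗[ℝ] G ≃ C` and the grading of `C` is generated by the products of
homogeneous elements. -/
theorem propertyB_of_graded_tensor_product
    {H G C : Type*} [Ring H] [Algebra ℝ H] [Ring G] [Algebra ℝ G]
    [Ring C] [Algebra ℝ C]
    (𝒜 : ℕ → Submodule ℝ H) [GradedAlgebra 𝒜]
    (ℬ : ℕ → Submodule ℝ G) [GradedAlgebra ℬ]
    (𝒞 : ℕ → Submodule ℝ C) [GradedAlgebra 𝒞]
    (hcommH : ∀ (p q : ℕ) (x y : H), x ∈ 𝒜 p → y ∈ 𝒜 q →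
      x * y = ((-1 : ℝ) ^ (p * q)) • (y * x))
    (hcommG : ∀ (p q : ℕ) (x y : G), x ∈ ℬ p → y ∈ ℬ q →
      x * y = ((-1 : ℝ) ^ (p * q)) • (y * x))
    (f : H →ₐ[ℝ] C) (g : G →ₐ[ℝ] C)
    (hf : ∀ p : ℕ, ∀ x ∈ 𝒜 p, f x ∈ 𝒞 p)
    (hg : ∀ q : ℕ, ∀ y ∈ ℬ q, g y ∈ 𝒞 q)
    (hkoszul : ∀ (p q : ℕ) (x : H) (y : G), x ∈ 𝒜 p → y ∈ ℬ q →
      g y * f x = ((-1 : ℝ) ^ (p * q)) • (f x * g y))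
    (hbij : Function.Bijective
      (TensorProduct.lift
        (((LinearMap.mul ℝ C).comp f.toLinearMap).compl₂ g.toLinearMap)))
    (hgrade : ∀ m : ℕ, 𝒞 m =
      ⨆ p : ℕ, ⨆ q : ℕ, ⨆ _ : p + q = m,
        Submodule.span ℝ {z : C | ∃ x ∈ 𝒜 p, ∃ y ∈ ℬ q, z = f x * g y})
    (hH : HasPropertyB 𝒜) (hG : HasPropertyB ℬ) :
    HasPropertyB 𝒞 :=
  propertyB_of_graded_tensor_product_general 𝒜 ℬ 𝒞 f g hf hg hkoszul hbij hgrade hH hG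
end

section
/- Let H = ⨁_{p≥0} H^p and G = ⨁_{p≥0} G^p be graded-commutative ℝ-algebras and suppose H satisfies Property B. Let θ be a graded derivation of negative degree of the graded tensor product H ⊗ G (with Koszul-sign multiplication) that vanishes on (H⊗G)^1 = H^1 ⊗ 1 + 1 ⊗ G^1. Then θ vanishes on the subalgebra H ⊗ 1. (Key step in the proof of Proposition 3.4.) -/
/-!
Fix a basis `b` of `G` made of homogeneous elements. Every element of `C ≅ H ⊗ G` is uniquely
`∑ₐ f xₐ * g (b a)`, and for `b a` of degree `j` the coefficient map `Φₐ : C → H` is left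
`H`-linear and right `H`-linear up to the Koszul sign `(-1)^(j q)`. Correcting that sign by the
grade involution `S_j x = (-1)^(j p) x`, the map `Φₐ ∘ θ ∘ f ∘ S_j` is a graded derivation of `H`
of degree `-(k + j)` vanishing on `H^1`, hence zero by Property B. So all coefficients of
`θ (f x)` vanish.
-/

open TensorProduct

section TensorCoeff

variable {R M N P κ : Type*} [CommSemiring R] [AddCommMonoid M] [Module R M]
  [AddCommMonoid N] [Module R N] [AddCommMonoid P] [Module R P]
  (E : M ⊗[R] N ≃ₗ[R] P) (b : Module.Basis κ R N)

/-- The `M`-coefficient of `E (∑ₐ mₐ ⊗ b a)` at `b a`. -/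
noncomputable def tensorCoeff (a : κ) : P →ₗ[R] M :=
  (TensorProduct.rid R M).toLinearMap ∘ₗ (b.coord a).lTensor M ∘ₗ E.symm.toLinearMap

lemma tensorCoeff_tmul (a : κ) (m : M) (n : N) :
    tensorCoeff E b a (E (m ⊗ₜ n)) = b.repr n a • m := by
  simp [tensorCoeff]

lemma eq_zero_of_forall_tensorCoeff_eq_zero {c : P} (h : ∀ a, tensorCoeff E b a c = 0) :
    c = 0 := by
  classical
  have hcoeff : ∀ u a, TensorProduct.equivFinsuppOfBasisRight b u a = tensorCoeff E b a (E u) := by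
    intro u a
    induction u using TensorProduct.induction_on with
    | zero => simp
    | tmul m n => simp [tensorCoeff_tmul]
    | add u v hu hv => simp only [map_add, Finsupp.add_apply, hu, hv]
  apply E.symm.injective
  apply (TensorProduct.equivFinsuppOfBasisRight b).injective
  ext a
  simpa [hcoeff] using h a

end TensorCoeff

def IsTensorGrading {R H G C : Type*} [CommRing R] [Ring H] [Algebra R H] [Ring G] [Algebra R G]
    [Ring C] [Algebra R C] (𝒜 : ℕ → Submodule R H) (ℬ : ℕ → Submodule R G) (f : H →ₐ[R] C)
    (g : G →ₐ[R] C) (𝒞 : ℕ → Submodule R C) : Prop :=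
  ∀ m : ℕ, 𝒞 m = ⨆ p : ℕ, ⨆ q : ℕ, ⨆ _ : p + q = m,
    Submodule.span R {z : C | ∃ x ∈ 𝒜 p, ∃ y ∈ ℬ q, z = f x * g y}

section Coefficients

variable {R H G C : Type*} [CommRing R] [Ring H] [Algebra R H] [Ring G] [Algebra R G]
  [Ring C] [Algebra R C] {f : H →ₐ[R] C} {g : G →ₐ[R] C}
  (E : H ⊗[R] G ≃ₗ[R] C) {κ : Type*} (b : Module.Basis κ R G)

lemma linearMap_ext_mul_basis (hE : ∀ x y, E (x ⊗ₜ y) = f x * g y) {M : Type*}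
    [AddCommMonoid M] [Module R M] {φ ψ : C →ₗ[R] M}
    (h : ∀ x a, φ (f x * g (b a)) = ψ (f x * g (b a))) : φ = ψ := by
  have : φ ∘ₗ E.toLinearMap = ψ ∘ₗ E.toLinearMap :=
    TensorProduct.ext <| LinearMap.ext fun x => b.ext fun a => by simpa [hE] using h x a
  exact (LinearMap.cancel_right E.surjective).mp this

lemma tensorCoeff_mul (hE : ∀ x y, E (x ⊗ₜ y) = f x * g y) (a : κ) (x : H) (y : G) :
    tensorCoeff E b a (f x * g y) = b.repr y a • x := by
  rw [← hE, tensorCoeff_tmul]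

lemma tensorCoeff_mul_left (hE : ∀ x y, E (x ⊗ₜ y) = f x * g y) (a : κ) (x : H) (c : C) :
    tensorCoeff E b a (f x * c) = x * tensorCoeff E b a c := by
  have := linearMap_ext_mul_basis E b hE
    (φ := tensorCoeff E b a ∘ₗ LinearMap.mulLeft R (f x))
    (ψ := LinearMap.mulLeft R x ∘ₗ tensorCoeff E b a) fun x' a' => by
      simp [← mul_assoc, ← map_mul, tensorCoeff_mul E _ hE]
  exact LinearMap.congr_fun this c

variable {𝒜 : ℕ → Submodule R H} {ℬ : ℕ → Submodule R G} (hℬ : DirectSum.IsInternal ℬ)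
  {α : ℕ → Type*} (v : ∀ j, Module.Basis (α j) R (ℬ j))

lemma tensorCoeff_mul_of_ne (hE : ∀ x y, E (x ⊗ₜ y) = f x * g y) {j q : ℕ} (hqj : q ≠ j)
    (i : α j) (x : H) {y : G} (hy : y ∈ ℬ q) :
    tensorCoeff E (hℬ.collectedBasis v) ⟨j, i⟩ (f x * g y) = 0 := by
  rw [tensorCoeff_mul E _ hE, hℬ.collectedBasis_repr_of_mem_ne v hqj hy, zero_smul]

lemma tensorCoeff_mul_right (hE : ∀ x y, E (x ⊗ₜ y) = f x * g y)
    (hkoszul : ∀ (p q : ℕ) (x : H) (y : G), x ∈ 𝒜 p → y ∈ ℬ q →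
      g y * f x = ((-1 : R) ^ (p * q)) • (f x * g y))
    {j q : ℕ} (i : α j) {y : H} (hy : y ∈ 𝒜 q) (c : C) :
    tensorCoeff E (hℬ.collectedBasis v) ⟨j, i⟩ (c * f y) =
      (-1 : R) ^ (j * q) • (tensorCoeff E (hℬ.collectedBasis v) ⟨j, i⟩ c * y) := by
  set b := hℬ.collectedBasis v
  have := linearMap_ext_mul_basis E b hE
    (φ := tensorCoeff E b ⟨j, i⟩ ∘ₗ LinearMap.mulRight R (f y))
    (ψ := (-1 : R) ^ (j * q) • (LinearMap.mulRight R y ∘ₗ tensorCoeff E b ⟨j, i⟩))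
    fun x a => by
      have hswap : f x * g (b a) * f y = (-1 : R) ^ (q * a.1) • (f (x * y) * g (b a)) := by
        rw [mul_assoc, hkoszul q a.1 y (b a) hy (hℬ.collectedBasis_mem v a), mul_smul_comm,
          ← mul_assoc, ← map_mul]
      simp only [LinearMap.comp_apply, LinearMap.mulRight_apply, LinearMap.smul_apply, hswap,
        map_smul, tensorCoeff_mul E _ hE, b.repr_self]
      by_cases ha : a = ⟨j, i⟩
      · subst ha
        rw [mul_comm q j]
      · simp [ha]
  exact LinearMap.congr_fun this c

variable {𝒞 : ℕ → Submodule R C}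

lemma IsTensorGrading.le_comap (hgrade : IsTensorGrading 𝒜 ℬ f g 𝒞) {M : Type*}
    [AddCommMonoid M] [Module R M] (φ : C →ₗ[R] M) (S : Submodule R M) {m : ℕ}
    (h : ∀ p q x y, x ∈ 𝒜 p → y ∈ ℬ q → p + q = m → φ (f x * g y) ∈ S) :
    𝒞 m ≤ S.comap φ := by
  rw [hgrade m]
  refine iSup_le fun p => iSup_le fun q => iSup_le fun hpq => Submodule.span_le.mpr ?_
  rintro _ ⟨x, hx, y, hy, rfl⟩
  exact h p q x y hx hy hpq

lemma tensorCoeff_mem_of_mem (hE : ∀ x y, E (x ⊗ₜ y) = f x * g y)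
    (hgrade : IsTensorGrading 𝒜 ℬ f g 𝒞) {j m : ℕ} (i : α j) {z : C} (hz : z ∈ 𝒞 m) :
    tensorCoeff E (hℬ.collectedBasis v) ⟨j, i⟩ z ∈ 𝒜 (m - j) := by
  refine hgrade.le_comap _ _ (fun p q x y hx hy hpq => ?_) hz
  rcases eq_or_ne q j with rfl | hqj
  · rw [tensorCoeff_mul E _ hE, show m - q = p by omega]
    exact Submodule.smul_mem _ _ hx
  · rw [tensorCoeff_mul_of_ne E hℬ v hE hqj i x hy]
    exact Submodule.zero_mem _

lemma tensorCoeff_eq_zero_of_mem_of_lt (hE : ∀ x y, E (x ⊗ₜ y) = f x * g y)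
    (hgrade : IsTensorGrading 𝒜 ℬ f g 𝒞) {j m : ℕ} (hmj : m < j) (i : α j) {z : C}
    (hz : z ∈ 𝒞 m) : tensorCoeff E (hℬ.collectedBasis v) ⟨j, i⟩ z = 0 := by
  refine (Submodule.mem_bot R).mp <| hgrade.le_comap _ ⊥ (fun p q x y _ hy hpq => ?_) hz
  rw [Submodule.mem_bot, tensorCoeff_mul_of_ne E hℬ v hE (by omega) i x hy]

end Coefficients

section GradeSign

variable {R H : Type*} [CommRing R] [Ring H] [Algebra R H]
  (𝒜 : ℕ → Submodule R H) [DirectSum.Decomposition 𝒜]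

noncomputable def gradeSign (j : ℕ) : H →ₗ[R] H :=
  DirectSum.toModule R ℕ H (fun p => (-1 : R) ^ (j * p) • (𝒜 p).subtype) ∘ₗ
    (DirectSum.decomposeLinearEquiv 𝒜).toLinearMap

lemma gradeSign_of_mem (j : ℕ) {p : ℕ} {x : H} (hx : x ∈ 𝒜 p) :
    gradeSign 𝒜 j x = (-1 : R) ^ (j * p) • x := by
  have : DirectSum.decompose 𝒜 x = DirectSum.lof R ℕ (fun p => 𝒜 p) p ⟨x, hx⟩ :=
    DirectSum.decompose_of_mem 𝒜 hx
  rw [gradeSign, LinearMap.comp_apply, LinearEquiv.coe_coe,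
    DirectSum.decomposeLinearEquiv_apply, this, DirectSum.toModule_lof]
  rfl

lemma gradeSign_gradeSign (j : ℕ) (x : H) : gradeSign 𝒜 j (gradeSign 𝒜 j x) = x := by
  induction x using DirectSum.Decomposition.inductionOn 𝒜 with
  | zero => simp
  | @homogeneous p x =>
    rw [gradeSign_of_mem 𝒜 j x.2, map_smul, gradeSign_of_mem 𝒜 j x.2, smul_smul, ← pow_add,
      ← two_mul, pow_mul, neg_one_sq, one_pow, one_smul]
  | add x y hx hy => simp only [map_add, hx, hy]

end GradeSign

lemma isGradedDerivation_comp_gradeSign {H : Type*} [Ring H] [Algebra ℝ H]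
    (𝒜 : ℕ → Submodule ℝ H) [GradedAlgebra 𝒜] {k j : ℕ} {D : H →ₗ[ℝ] H}
    (mem : ∀ p : ℕ, ∀ x ∈ 𝒜 p, k + j ≤ p → D x ∈ 𝒜 (p - (k + j)))
    (low : ∀ p : ℕ, ∀ x ∈ 𝒜 p, p < k + j → D x = 0)
    (leibniz : ∀ (p q : ℕ) (x y : H), x ∈ 𝒜 p → y ∈ 𝒜 q →
      D (x * y) = (-1 : ℝ) ^ (j * q) • (D x * y) + (-1 : ℝ) ^ (k * p) • (x * D y)) :
    IsGradedDerivation 𝒜 (k + j) (D ∘ₗ gradeSign 𝒜 j) := by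
  refine ⟨fun p x hx hp => ?_, fun p x hx hp => ?_, fun p x hx y => ?_⟩
  · rw [LinearMap.comp_apply, gradeSign_of_mem 𝒜 j hx, map_smul]
    exact Submodule.smul_mem _ _ (mem p x hx hp)
  · rw [LinearMap.comp_apply, gradeSign_of_mem 𝒜 j hx, map_smul, low p x hx hp, smul_zero]
  induction y using DirectSum.Decomposition.inductionOn 𝒜 with
  | zero => simp
  | @homogeneous q y =>
    have sign_left : (-1 : ℝ) ^ (j * (p + q)) * (-1) ^ (j * q) = (-1) ^ (j * p) := by
      rw [← pow_add, show j * (p + q) + j * q = j * p + 2 * (j * q) by ring, pow_add, pow_mul]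
      norm_num
    have sign_right : (-1 : ℝ) ^ (j * (p + q)) * (-1) ^ (k * p) =
        (-1) ^ ((k + j) * p) * (-1) ^ (j * q) := by
      rw [← pow_add, ← pow_add]
      ring_nf
    simp only [LinearMap.comp_apply]
    rw [gradeSign_of_mem 𝒜 j (SetLike.mul_mem_graded hx y.2), gradeSign_of_mem 𝒜 j hx,
      gradeSign_of_mem 𝒜 j y.2, map_smul, map_smul, map_smul, leibniz p q x y hx y.2, smul_add,
      smul_smul, smul_smul, sign_left, sign_right, smul_mul_assoc, mul_smul_comm, smul_smul]
  | add y z hy hz => simp only [mul_add, map_add, hy, hz, smul_add, add_mul]; abel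

lemma isGradedDerivation_tensorCoeff_comp {H G C : Type*} [Ring H] [Algebra ℝ H] [Ring G]
    [Algebra ℝ G] [Ring C] [Algebra ℝ C] {𝒜 : ℕ → Submodule ℝ H} [GradedAlgebra 𝒜]
    {ℬ : ℕ → Submodule ℝ G} (hℬ : DirectSum.IsInternal ℬ) {α : ℕ → Type*}
    (v : ∀ j, Module.Basis (α j) ℝ (ℬ j)) {𝒞 : ℕ → Submodule ℝ C} {f : H →ₐ[ℝ] C}
    {g : G →ₐ[ℝ] C} (E : H ⊗[ℝ] G ≃ₗ[ℝ] C) (hE : ∀ x y, E (x ⊗ₜ y) = f x * g y)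
    (hf : ∀ p : ℕ, ∀ x ∈ 𝒜 p, f x ∈ 𝒞 p)
    (hkoszul : ∀ (p q : ℕ) (x : H) (y : G), x ∈ 𝒜 p → y ∈ ℬ q →
      g y * f x = ((-1 : ℝ) ^ (p * q)) • (f x * g y))
    (hgrade : IsTensorGrading 𝒜 ℬ f g 𝒞) {k : ℕ} {θ : C →ₗ[ℝ] C}
    (hθ : IsGradedDerivation 𝒞 k θ) {j : ℕ} (i : α j) :
    IsGradedDerivation 𝒜 (k + j)
      ((tensorCoeff E (hℬ.collectedBasis v) ⟨j, i⟩ ∘ₗ θ ∘ₗ f.toLinearMap) ∘ₗ gradeSign 𝒜 j) := by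
  refine isGradedDerivation_comp_gradeSign 𝒜 (fun p x hx hp => ?_) (fun p x hx hp => ?_)
    (fun p q x y hx hy => ?_)
  · have hθx : θ (f x) ∈ 𝒞 (p - k) := hθ.mem p _ (hf p x hx) (by omega)
    simpa [Nat.sub_sub] using tensorCoeff_mem_of_mem E hℬ v hE hgrade i hθx
  · rcases lt_or_ge p k with hpk | hkp
    · simp [hθ.low p _ (hf p x hx) hpk]
    · exact tensorCoeff_eq_zero_of_mem_of_lt E hℬ v hE hgrade (by omega) i
        (hθ.mem p _ (hf p x hx) hkp)
  · simp only [LinearMap.comp_apply, AlgHom.toLinearMap_apply, map_mul,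
      hθ.leibniz p (f x) (hf p x hx) (f y), map_add, map_smul,
      tensorCoeff_mul_right E hℬ v hE hkoszul i hy, tensorCoeff_mul_left E _ hE]

/-- `C` stands for `H ⊗ G`, with `f x = x ⊗ 1` and `g y = 1 ⊗ y`, so that `f x * g y = x ⊗ y`. -/
theorem derivation_vanishes_on_first_factor_general
    {H G C : Type*} [Ring H] [Algebra ℝ H] [Ring G] [Algebra ℝ G]
    [Ring C] [Algebra ℝ C]
    (𝒜 : ℕ → Submodule ℝ H) [GradedAlgebra 𝒜]
    (ℬ : ℕ → Submodule ℝ G) [GradedAlgebra ℬ]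
    (𝒞 : ℕ → Submodule ℝ C)
    (f : H →ₐ[ℝ] C) (g : G →ₐ[ℝ] C)
    (hf : ∀ p : ℕ, ∀ x ∈ 𝒜 p, f x ∈ 𝒞 p)
    (hkoszul : ∀ (p q : ℕ) (x : H) (y : G), x ∈ 𝒜 p → y ∈ ℬ q →
      g y * f x = ((-1 : ℝ) ^ (p * q)) • (f x * g y))
    (hbij : Function.Bijective
      (TensorProduct.lift
        (((LinearMap.mul ℝ C).comp f.toLinearMap).compl₂ g.toLinearMap)))
    (hgrade : ∀ m : ℕ, 𝒞 m =
      ⨆ p : ℕ, ⨆ q : ℕ, ⨆ _ : p + q = m,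
        Submodule.span ℝ {z : C | ∃ x ∈ 𝒜 p, ∃ y ∈ ℬ q, z = f x * g y})
    (hH : HasPropertyB 𝒜)
    (k : ℕ) (hk : 1 ≤ k) (θ : C →ₗ[ℝ] C)
    (hθ : IsGradedDerivation 𝒞 k θ)
    (hθ1 : ∀ z ∈ 𝒞 1, θ z = 0) :
    ∀ x : H, θ (f x) = 0 := by
  let E : H ⊗[ℝ] G ≃ₗ[ℝ] C := LinearEquiv.ofBijective _ hbij
  have hE : ∀ x y, E (x ⊗ₜ y) = f x * g y := fun _ _ => rfl
  have hℬ := DirectSum.Decomposition.isInternal ℬ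
  let v := fun j => Module.Basis.ofVectorSpace ℝ (ℬ j)
  intro x
  refine eq_zero_of_forall_tensorCoeff_eq_zero E (hℬ.collectedBasis v) fun ⟨j, i⟩ => ?_
  have hD := isGradedDerivation_tensorCoeff_comp hℬ v E hE hf hkoszul hgrade hθ i
  have hD_zero := hH (k + j) (by omega) _ hD fun y hy => by
    simp [gradeSign_of_mem 𝒜 j hy, hθ1 _ (hf 1 y hy)]
  simpa [gradeSign_gradeSign] using LinearMap.congr_fun hD_zero (gradeSign 𝒜 j x)

/-- Key step in the proof of Proposition 3.4: if `H` has Property B and `θ` is a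
graded derivation of negative degree of the graded tensor product `H ⊗ G`
(axiomatized as a graded algebra `C` with degree-preserving algebra maps
`f : H → C`, `g : G → C` whose images commute up to Koszul sign, with
`x ⊗ y ↦ f x * g y` a linear bijection and the grading of `C` generated by the
products of homogeneous elements) vanishing on `(H ⊗ G)^1`, then `θ` vanishes
on the subalgebra `H ⊗ 1`, i.e. on the image of `f`. -/
theorem derivation_vanishes_on_first_factor
    {H G C : Type*} [Ring H] [Algebra ℝ H] [Ring G] [Algebra ℝ G]
    [Ring C] [Algebra ℝ C]
    (𝒜 : ℕ → Submodule ℝ H) [GradedAlgebra 𝒜]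
    (ℬ : ℕ → Submodule ℝ G) [GradedAlgebra ℬ]
    (𝒞 : ℕ → Submodule ℝ C) [GradedAlgebra 𝒞]
    (hcommH : ∀ (p q : ℕ) (x y : H), x ∈ 𝒜 p → y ∈ 𝒜 q →
      x * y = ((-1 : ℝ) ^ (p * q)) • (y * x))
    (hcommG : ∀ (p q : ℕ) (x y : G), x ∈ ℬ p → y ∈ ℬ q →
      x * y = ((-1 : ℝ) ^ (p * q)) • (y * x))
    (f : H →ₐ[ℝ] C) (g : G →ₐ[ℝ] C)
    (hf : ∀ p : ℕ, ∀ x ∈ 𝒜 p, f x ∈ 𝒞 p)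
    (hg : ∀ q : ℕ, ∀ y ∈ ℬ q, g y ∈ 𝒞 q)
    (hkoszul : ∀ (p q : ℕ) (x : H) (y : G), x ∈ 𝒜 p → y ∈ ℬ q →
      g y * f x = ((-1 : ℝ) ^ (p * q)) • (f x * g y))
    (hbij : Function.Bijective
      (TensorProduct.lift
        (((LinearMap.mul ℝ C).comp f.toLinearMap).compl₂ g.toLinearMap)))
    (hgrade : ∀ m : ℕ, 𝒞 m =
      ⨆ p : ℕ, ⨆ q : ℕ, ⨆ _ : p + q = m,
        Submodule.span ℝ {z : C | ∃ x ∈ 𝒜 p, ∃ y ∈ ℬ q, z = f x * g y})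
    (hH : HasPropertyB 𝒜)
    (k : ℕ) (hk : 1 ≤ k) (θ : C →ₗ[ℝ] C)
    (hθ : IsGradedDerivation 𝒞 k θ)
    (hθ1 : ∀ z ∈ 𝒞 1, θ z = 0) :
    ∀ x : H, θ (f x) = 0 :=
  derivation_vanishes_on_first_factor_general 𝒜 ℬ 𝒞 f g hf hkoszul hbij hgrade hH k hk θ hθ hθ1
end

section
/- Let (A, d) be a cochain complex of ℝ-vector spaces, A = ⨁_{p≥0} A^p with d : A^p → A^{p+1}, d∘d = 0. Let B = ⨁_{p≥0} B^p be a graded subspace with d(B^p) ⊆ B^{p+1}, and let e : B^p → A^{p+1} be a degree +1 injective linear map (multiplication by a closed degree-1 element η) satisfying d(e(b)) = −e(d b) for all b ∈ B. Suppose that A^p = B^p ⊕ e(B^{p−1}) (internal direct sum) for every p. Then for every p there is a linear isomorphism H^p(A, d) ≅ H^p(B, d) ⊕ H^{p−1}(B, d). (Abstract form of Corollary 4.x: H^p_η(M) = H^p_1(M) ⊕ [η] ∧ H^{p−1}_1(M), so the cohomology of Ω^*_η(M) depends only on that of Ω^*_1(M).) -/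
set_option synthInstance.maxHeartbeats 1000000
set_option maxHeartbeats 1000000

/-- The cohomology of a cochain complex `(X, d)` (indexed over ℕ) in positive
degree `p + 1`: the kernel of `d (p+1)` modulo the image of `d p`. -/
noncomputable abbrev cochainCohomologySucc
    (X : ℕ → Type*) [∀ p, AddCommGroup (X p)] [∀ p, Module ℝ (X p)]
    (d : ∀ p : ℕ, X p →ₗ[ℝ] X (p + 1)) (p : ℕ) :=
  LinearMap.ker (d (p + 1)) ⧸
    Submodule.comap (LinearMap.ker (d (p + 1))).subtype (LinearMap.range (d p))

/-!
Splitting `A^(q+1) = B^(q+1) ⊕ e(B^q)` gives an isomorphism `ψ : B^(q+1) × B^q ≃ A^(q+1)`,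
`(b, c) ↦ b + e c`, and the relation `d (e c) = -e (d c)` says that `ψ` carries the
differential `d × (-d)` of the product complex to `d`. So `ψ` matches the cocycles and the
coboundaries of `A` with products of those of `B` (a sign on the differential changes neither),
and the subquotient `H^(q+1)(A)` splits as `H^(q+1)(B) × H^q(B)`. In low degrees `A^0 = B^0`,
so the coboundaries in `A^1` are `d(B^0) × 0` and the second factor is all of `ker d₀ = H^0(B)`.
-/

open LinearMap

namespace Submodule

variable {R M M' N M₁ M₂ : Type*} [Ring R] [AddCommGroup M] [Module R M] [AddCommGroup M']
  [Module R M'] [AddCommGroup N] [Module R N] [AddCommGroup M₁] [Module R M₁] [AddCommGroup M₂]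
  [Module R M₂]

abbrev Subquotient (K S : Submodule R M) : Type _ := K ⧸ S.comap K.subtype

noncomputable def subquotientEquiv {K S : Submodule R M} {K' S' : Submodule R M'}
    (e : M ≃ₗ[R] M') (hK : K.map (e : M →ₗ[R] M') = K') (hS : S.map (e : M →ₗ[R] M') = S') :
    K.Subquotient S ≃ₗ[R] K'.Subquotient S' :=
  Quotient.equiv _ _ (e.ofSubmodules K K' hK) <| by
    subst hK hS
    ext
    simp

noncomputable def subquotientProdEquiv (K₁ S₁ : Submodule R M₁) (K₂ S₂ : Submodule R M₂) :
    (K₁.prod K₂).Subquotient (S₁.prod S₂) ≃ₗ[R] K₁.Subquotient S₁ × K₂.Subquotient S₂ :=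
  let π : K₁.prod K₂ →ₗ[R] K₁.Subquotient S₁ × K₂.Subquotient S₂ :=
    ((S₁.comap K₁.subtype).mkQ ∘ₗ
        (LinearMap.fst R M₁ M₂).restrict fun _ hx => (mem_prod.mp hx).1).prod
      ((S₂.comap K₂.subtype).mkQ ∘ₗ
        (LinearMap.snd R M₁ M₂).restrict fun _ hx => (mem_prod.mp hx).2)
  have hπ : Function.Surjective π := by
    rintro ⟨⟨⟨a, ha⟩⟩, ⟨⟨b, hb⟩⟩⟩
    exact ⟨⟨(a, b), ha, hb⟩, rfl⟩
  have hker : (S₁.prod S₂).comap (K₁.prod K₂).subtype = LinearMap.ker π := by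
    ext x
    simp only [mem_comap, subtype_apply, mem_prod, ker_prod, mem_inf, mem_ker, coe_comp,
      Function.comp_apply, mkQ_apply, Quotient.mk_eq_zero, π]
    rfl
  (quotEquivOfEq _ _ hker).trans (π.quotKerEquivOfSurjective hπ)

noncomputable def prodEquivOfIsComplRange (P : Submodule R M) {f : N →ₗ[R] M}
    (hf : Function.Injective f) (h : IsCompl P (range f)) : (P × N) ≃ₗ[R] M :=
  .ofBijective (P.subtype.coprod f)
    ⟨by rw [← ker_eq_bot, ker_coprod_of_disjoint_range _ _ (by simpa using h.disjoint),
        ker_subtype, ker_eq_bot.mpr hf, prod_bot],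
      by rw [← range_eq_top, range_coprod, range_subtype, h.sup_eq_top]⟩

@[simp]
theorem prodEquivOfIsComplRange_apply (P : Submodule R M) {f : N →ₗ[R] M}
    (hf : Function.Injective f) (h : IsCompl P (range f)) (x : P × N) :
    P.prodEquivOfIsComplRange hf h x = x.1 + f x.2 :=
  rfl

end Submodule

namespace LinearMap

variable {R M M' N N' : Type*} [Ring R] [AddCommGroup M] [Module R M] [AddCommGroup M']
  [Module R M'] [AddCommGroup N] [Module R N] [AddCommGroup N'] [Module R N']

theorem map_symm_ker_of_comp_eq {g : M →ₗ[R] N} {D : M' →ₗ[R] N'} (φ : M' ≃ₗ[R] M)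
    {φ' : N' →ₗ[R] N} (hφ' : Function.Injective φ') (h : g ∘ₗ φ.toLinearMap = φ' ∘ₗ D) :
    (ker g).map φ.symm.toLinearMap = ker D := by
  rw [← Submodule.comap_equiv_eq_map_symm, ← ker_comp, h, ker_comp, ker_eq_bot.mpr hφ',
    Submodule.comap_bot]

theorem map_symm_range_of_comp_eq {g : M →ₗ[R] N} {D : M' →ₗ[R] N'} {φ : M' →ₗ[R] M}
    (hφ : Function.Surjective φ) (φ' : N' ≃ₗ[R] N) (h : g ∘ₗ φ = φ'.toLinearMap ∘ₗ D) :
    (range g).map φ'.symm.toLinearMap = range D := by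
  rw [← range_comp, ← range_comp_of_range_eq_top _ (range_eq_top.mpr hφ), comp_assoc, h,
    ← comp_assoc, LinearEquiv.symm_comp, id_comp]

noncomputable def kerEquivKerRestrictOfEqTop {f : M →ₗ[R] N} {p : Submodule R M}
    {q : Submodule R N} (hp : p = ⊤) (hf : ∀ x ∈ p, f x ∈ q) : ker f ≃ₗ[R] ker (f.restrict hf) :=
  (LinearEquiv.ofTop p hp).symm.ofSubmodules _ _ <|
    map_symm_ker_of_comp_eq _ q.injective_subtype (by ext; rfl)

end LinearMap

section EtaSplitting

variable {R : Type*} [Ring R] {A : ℕ → Type*} [∀ p, AddCommGroup (A p)] [∀ p, Module R (A p)]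
  {d : ∀ p, A p →ₗ[R] A (p + 1)} {B : ∀ p, Submodule R (A p)}
  (hdB : ∀ p, ∀ x ∈ B p, d p x ∈ B (p + 1)) {e : ∀ p, B p →ₗ[R] A (p + 1)}
  (heinj : ∀ p, Function.Injective (e p)) (hB : ∀ p, IsCompl (B (p + 1)) (range (e p)))

local notation "ψ" q => Submodule.prodEquivOfIsComplRange (B (q + 1)) (heinj q) (hB q)
local notation "δ" q => LinearMap.restrict (d q) (hdB q)

theorem d_comp_prodEquivOfIsComplRange
    (hde : ∀ (p : ℕ) (b : B p), d (p + 1) (e p b) = -e (p + 1) ((δ p) b)) (q : ℕ) :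
    d (q + 1) ∘ₗ (ψ q).toLinearMap = (ψ (q + 1)).toLinearMap ∘ₗ (δ (q + 1)).prodMap (-δ q) := by
  refine LinearMap.ext fun x => ?_
  simp [hde]

theorem map_prodEquivOfIsComplRange_symm_ker_d
    (hde : ∀ (p : ℕ) (b : B p), d (p + 1) (e p b) = -e (p + 1) ((δ p) b)) (q : ℕ) :
    (ker (d (q + 1))).map (ψ q).symm.toLinearMap = (ker (δ (q + 1))).prod (ker (δ q)) := by
  rw [map_symm_ker_of_comp_eq _ (ψ (q + 1)).injective
    (d_comp_prodEquivOfIsComplRange hdB heinj hB hde q), ker_prodMap, ker_neg]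

theorem map_prodEquivOfIsComplRange_symm_range_d_succ
    (hde : ∀ (p : ℕ) (b : B p), d (p + 1) (e p b) = -e (p + 1) ((δ p) b)) (q : ℕ) :
    (range (d (q + 1))).map (ψ (q + 1)).symm.toLinearMap =
      (range (δ (q + 1))).prod (range (δ q)) := by
  rw [map_symm_range_of_comp_eq (ψ q).surjective _
    (d_comp_prodEquivOfIsComplRange hdB heinj hB hde q), range_prodMap, range_neg]

theorem map_prodEquivOfIsComplRange_symm_range_d_zero (hzero : B 0 = ⊤) :
    (range (d 0)).map (ψ 0).symm.toLinearMap = (range (δ 0)).prod ⊥ := by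
  rw [map_symm_range_of_comp_eq (LinearEquiv.ofTop _ hzero).surjective (ψ 0)
    (D := inl R _ _ ∘ₗ δ 0) (by refine LinearMap.ext fun x => ?_; simp), range_comp,
    Submodule.map_inl]

end EtaSplitting

theorem cohomology_splitting_of_eta_complex_general
    (A : ℕ → Type*) [∀ p, AddCommGroup (A p)] [∀ p, Module ℝ (A p)]
    (d : ∀ p : ℕ, A p →ₗ[ℝ] A (p + 1))
    (B : ∀ p : ℕ, Submodule ℝ (A p))
    (hdB : ∀ p : ℕ, ∀ x ∈ B p, d p x ∈ B (p + 1))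
    (e : ∀ p : ℕ, (B p) →ₗ[ℝ] A (p + 1))
    (heinj : ∀ p : ℕ, Function.Injective (e p))
    (hde : ∀ (p : ℕ) (b : B p),
      d (p + 1) (e p b) = - e (p + 1) ((d p).restrict (hdB p) b))
    (hdisj : ∀ p : ℕ, Disjoint (B (p + 1)) (LinearMap.range (e p)))
    (hsup : ∀ p : ℕ, B (p + 1) ⊔ LinearMap.range (e p) = ⊤)
    (hzero : B 0 = ⊤) :
    Nonempty (LinearMap.ker (d 0) ≃ₗ[ℝ]
        LinearMap.ker ((d 0).restrict (hdB 0))) ∧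
    Nonempty (cochainCohomologySucc A d 0 ≃ₗ[ℝ]
        cochainCohomologySucc (fun p => B p) (fun p => (d p).restrict (hdB p)) 0 ×
          LinearMap.ker ((d 0).restrict (hdB 0))) ∧
    ∀ p : ℕ,
      Nonempty (cochainCohomologySucc A d (p + 1) ≃ₗ[ℝ]
        cochainCohomologySucc (fun p => B p) (fun p => (d p).restrict (hdB p)) (p + 1) ×
          cochainCohomologySucc (fun p => B p) (fun p => (d p).restrict (hdB p)) p) := by
  have hB : ∀ p, IsCompl (B (p + 1)) (LinearMap.range (e p)) :=
    fun p => ⟨hdisj p, codisjoint_iff.mpr (hsup p)⟩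
  refine ⟨⟨LinearMap.kerEquivKerRestrictOfEqTop hzero (hdB 0)⟩, ⟨?_⟩, fun p => ⟨?_⟩⟩
  · refine (Submodule.subquotientEquiv _
      (map_prodEquivOfIsComplRange_symm_ker_d hdB heinj hB hde 0)
      (map_prodEquivOfIsComplRange_symm_range_d_zero hdB heinj hB hzero)).trans <|
        (Submodule.subquotientProdEquiv _ _ _ _).trans <|
          LinearEquiv.prodCongr (.refl _ _) (Submodule.quotEquivOfEqBot _ ?_)
    rw [Submodule.comap_bot, Submodule.ker_subtype]
  · exact (Submodule.subquotientEquiv _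
      (map_prodEquivOfIsComplRange_symm_ker_d hdB heinj hB hde (p + 1))
      (map_prodEquivOfIsComplRange_symm_range_d_succ hdB heinj hB hde p)).trans
        (Submodule.subquotientProdEquiv _ _ _ _)

/-- Abstract form of Corollary 4.x (`H^p_η(M) = H^p_1(M) ⊕ [η] ∧ H^{p-1}_1(M)`):
let `(A, d)` be a cochain complex of ℝ-vector spaces (indexed over ℕ, so
implicitly `A^p = 0` for `p < 0`), `B ⊆ A` a graded subcomplex, and
`e : B^p → A^(p+1)` a degree `+1` injective linear map with `d(e b) = - e(d b)`
such that `A^p = B^p ⊕ e(B^(p-1))` for every `p` (so `A^0 = B^0`).  Then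
`H^p(A) ≅ H^p(B) ⊕ H^(p-1)(B)` for every `p` (the `H^(p-1)(B)` summand being
zero for `p = 0`); the degree `0` cohomologies are the kernels of `d` in
degree `0`. -/
theorem cohomology_splitting_of_eta_complex
    (A : ℕ → Type*) [∀ p, AddCommGroup (A p)] [∀ p, Module ℝ (A p)]
    (d : ∀ p : ℕ, A p →ₗ[ℝ] A (p + 1))
    (hdd : ∀ (p : ℕ) (x : A p), d (p + 1) (d p x) = 0)
    (B : ∀ p : ℕ, Submodule ℝ (A p))
    (hdB : ∀ p : ℕ, ∀ x ∈ B p, d p x ∈ B (p + 1))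
    (e : ∀ p : ℕ, (B p) →ₗ[ℝ] A (p + 1))
    (heinj : ∀ p : ℕ, Function.Injective (e p))
    (hde : ∀ (p : ℕ) (b : B p),
      d (p + 1) (e p b) = - e (p + 1) ((d p).restrict (hdB p) b))
    (hdisj : ∀ p : ℕ, Disjoint (B (p + 1)) (LinearMap.range (e p)))
    (hsup : ∀ p : ℕ, B (p + 1) ⊔ LinearMap.range (e p) = ⊤)
    (hzero : B 0 = ⊤) :
    Nonempty (LinearMap.ker (d 0) ≃ₗ[ℝ]
        LinearMap.ker ((d 0).restrict (hdB 0))) ∧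
    Nonempty (cochainCohomologySucc A d 0 ≃ₗ[ℝ]
        cochainCohomologySucc (fun p => B p) (fun p => (d p).restrict (hdB p)) 0 ×
          LinearMap.ker ((d 0).restrict (hdB 0))) ∧
    ∀ p : ℕ,
      Nonempty (cochainCohomologySucc A d (p + 1) ≃ₗ[ℝ]
        cochainCohomologySucc (fun p => B p) (fun p => (d p).restrict (hdB p)) (p + 1) ×
          cochainCohomologySucc (fun p => B p) (fun p => (d p).restrict (hdB p)) p) :=
  cohomology_splitting_of_eta_complex_general A d B hdB e heinj hde hdisj hsup hzero
end
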